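/- Let φ₀, φ₁, φ₂, φ₃ : ℝ → Matrix (Fin n) (Fin n) ℂ be differentiable functions satisfying the system dφ₀/dt = [φ₀,φ₁], dφ₁/dt = [φ₀,φ₂], dφ₂/dt = [φ₀,φ₃], dφ₃/dt = 0 for all t. Then for every z ∈ ℂ the characteristic polynomial of φ(z,t) = φ₀(t) + z·φ₁(t) + z²·φ₂(t) + z³·φ₃(t) is independent of t: for all s, t ∈ ℝ, charpoly(φ(z,s)) = charpoly(φ(z,t)). -/

import Mathlib

/-!
With `A = φ₁ + z φ₂ + z² φ₃` the flow takes the Lax form `dφ/dt = [φ, A]`. For every `x`,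
`x - φ` then satisfies the same Lax equation, and Jacobi's formula gives
`d/dt det (x - φ) = tr (adj (x - φ) [x - φ, A]) = 0`, because `adj B` commutes with `B`
(`adj B · B = B · adj B = det B`). So every value of the characteristic polynomial is constant.
-/

open Finset Matrix

namespace Matrix

variable {ι R : Type*} [Fintype ι] [DecidableEq ι] [CommRing R]

theorem trace_adjugate_mul (M N : Matrix ι ι R) :
    (adjugate M * N).trace = ∑ k, (M.updateCol k fun i => N i k).det := by
  refine sum_congr rfl fun k _ => ?_
  rw [← cramer_apply, cramer_eq_adjugate_mulVec]
  rfl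

theorem det_updateCol_eq_sum_perm (M : Matrix ι ι R) (k : ι) (c : ι → R) :
    (M.updateCol k c).det
      = ∑ σ : Equiv.Perm ι, (σ.sign : R) * (c (σ k) * ∏ i ∈ univ.erase k, M (σ i) i) := by
  rw [det_apply']
  refine sum_congr rfl fun σ _ => ?_
  rw [← mul_prod_erase univ _ (mem_univ k), updateCol_self]
  congr 2
  refine prod_congr rfl fun i hi => ?_
  rw [updateCol_ne (ne_of_mem_erase hi)]

theorem trace_adjugate_mul_commutator (M A : Matrix ι ι R) :
    (adjugate M * (M * A - A * M)).trace = 0 := by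
  rw [mul_sub, trace_sub, ← mul_assoc, adjugate_mul, ← mul_assoc,
    trace_mul_comm (adjugate M * A) M, ← mul_assoc, mul_adjugate, sub_self]

variable {𝕜 𝔸 : Type*} [NontriviallyNormedField 𝕜] [NormedCommRing 𝔸] [NormedAlgebra 𝕜 𝔸]

theorem hasDerivAt_det {M : 𝕜 → Matrix ι ι 𝔸} {M' : Matrix ι ι 𝔸} {t : 𝕜}
    (hM : ∀ i j, HasDerivAt (fun s => M s i j) (M' i j) t) :
    HasDerivAt (fun s => (M s).det) (adjugate (M t) * M').trace t := by
  simp only [det_apply']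
  refine (HasDerivAt.fun_sum fun (σ : Equiv.Perm ι) _ =>
    (HasDerivAt.fun_finsetProd fun i _ => hM (σ i) i).const_mul ((σ.sign : ℤ) : 𝔸)).congr_deriv ?_
  simp only [trace_adjugate_mul, det_updateCol_eq_sum_perm, smul_eq_mul, mul_sum]
  rw [sum_comm]
  exact sum_congr rfl fun σ _ => sum_congr rfl fun k _ => by ring

theorem hasDerivAt_det_of_hasDerivAt_commutator {M : 𝕜 → Matrix ι ι 𝔸} {A : Matrix ι ι 𝔸}
    {t : 𝕜} (hM : ∀ i j, HasDerivAt (fun s => M s i j) ((M t * A - A * M t) i j) t) :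
    HasDerivAt (fun s => (M s).det) 0 t := by
  simpa only [trace_adjugate_mul_commutator] using hasDerivAt_det hM

end Matrix

theorem Matrix.charpoly_eq_of_hasDerivAt_commutator {ι 𝕜 : Type*} [Fintype ι] [DecidableEq ι]
    [RCLike 𝕜] {M A : ℝ → Matrix ι ι 𝕜}
    (hM : ∀ t i j, HasDerivAt (fun s => M s i j) ((M t * A t - A t * M t) i j) t) (s t : ℝ) :
    (M s).charpoly = (M t).charpoly := by
  refine Polynomial.funext fun x => ?_
  have hdet : ∀ u, HasDerivAt (fun v => (scalar ι x - M v).det) 0 u := fun u =>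
    hasDerivAt_det_of_hasDerivAt_commutator (A := A u) fun i j => by
      have hcomm : (scalar ι x - M u) * A u - A u * (scalar ι x - M u)
          = -(M u * A u - A u * M u) := by
        rw [sub_mul, mul_sub, (scalar_commute x (Commute.all x) (A u)).eq]
        abel
      rw [hcomm]
      exact (hM u i j).const_sub (scalar ι x i j)
  simp only [eval_charpoly]
  exact is_const_of_deriv_eq_zero (fun u => (hdet u).differentiableAt) (fun u => (hdet u).deriv) s t

theorem nahm_commutator_identity {R 𝔸 : Type*} [CommRing R] [Ring 𝔸] [Algebra R 𝔸]
    (z : R) (a b c d : 𝔸) :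
    (a + z • b + z ^ 2 • c + z ^ 3 • d) * (b + z • c + z ^ 2 • d)
      - (b + z • c + z ^ 2 • d) * (a + z • b + z ^ 2 • c + z ^ 3 • d)
    = (a * b - b * a) + z • (a * c - c * a) + z ^ 2 • (a * d - d * a) := by
  simp only [mul_add, add_mul, smul_mul_assoc, mul_smul_comm, smul_sub]
  module

/-- Along the flow `dφ₀/dt = [φ₀,φ₁]`, `dφ₁/dt = [φ₀,φ₂]`, `dφ₂/dt = [φ₀,φ₃]`,
`dφ₃/dt = 0`, the characteristic polynomial of
`φ(z,t) = φ₀ + z φ₁ + z² φ₂ + z³ φ₃` is independent of `t`. -/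
theorem nahm_flow_degree_charpoly_conserved {n : ℕ}
    (φ₀ φ₁ φ₂ φ₃ : ℝ → Matrix (Fin n) (Fin n) ℂ)
    (hφ₀ : ∀ i j, Differentiable ℝ fun t => φ₀ t i j)
    (hφ₁ : ∀ i j, Differentiable ℝ fun t => φ₁ t i j)
    (hφ₂ : ∀ i j, Differentiable ℝ fun t => φ₂ t i j)
    (hφ₃ : ∀ i j, Differentiable ℝ fun t => φ₃ t i j)
    (h0 : ∀ t i j, deriv (fun s => φ₀ s i j) t
        = (φ₀ t * φ₁ t - φ₁ t * φ₀ t) i j)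
    (h1 : ∀ t i j, deriv (fun s => φ₁ s i j) t
        = (φ₀ t * φ₂ t - φ₂ t * φ₀ t) i j)
    (h2 : ∀ t i j, deriv (fun s => φ₂ s i j) t
        = (φ₀ t * φ₃ t - φ₃ t * φ₀ t) i j)
    (h3 : ∀ t i j, deriv (fun s => φ₃ s i j) t = 0) :
    ∀ z : ℂ, ∀ s t : ℝ,
      (φ₀ s + z • φ₁ s + z ^ 2 • φ₂ s + z ^ 3 • φ₃ s).charpoly
        = (φ₀ t + z • φ₁ t + z ^ 2 • φ₂ t + z ^ 3 • φ₃ t).charpoly := by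
  intro z
  refine charpoly_eq_of_hasDerivAt_commutator (A := fun u => φ₁ u + z • φ₂ u + z ^ 2 • φ₃ u)
    fun u i j => ?_
  have d₀ := h0 u i j ▸ (hφ₀ i j u).hasDerivAt
  have d₁ := h1 u i j ▸ (hφ₁ i j u).hasDerivAt
  have d₂ := h2 u i j ▸ (hφ₂ i j u).hasDerivAt
  have d₃ := h3 u i j ▸ (hφ₃ i j u).hasDerivAt
  rw [nahm_commutator_identity]
  simpa using ((d₀.fun_add (d₁.const_mul z)).fun_add (d₂.const_mul (z ^ 2))).fun_add
    (d₃.const_mul (z ^ 3))
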